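/- arXiv:2410.18473 — 8 statements merged into one kernel-verified Lean document; each statement's English description precedes it below -/
import Mathlib

section
/- Let X be a solid Banach lattice of real functions on a set Γ, given by an injective linear map T : X → (Γ → ℝ). If the norm of X is strictly convex (i.e. ‖x‖ = ‖y‖ = 1 and ‖x + y‖ = 2 imply x = y), then the norm is strictly monotone: for all x, y ∈ X such that |(T y)(γ)| ≤ |(T x)(γ)| for every γ ∈ Γ and |(T y)(β)| < |(T x)(β)| for some β ∈ Γ, one has ‖y‖ < ‖x‖. -/
/-!
If `‖y‖ = ‖x‖` although `|T y| ≤ |T x|` with strict inequality at `β`, realize `|T x|` and `|T y|`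
by vectors `u` and `w`, which by solidity have the norms of `x` and `y`. Since
`2 |T y| ≤ |T x| + |T y|`, solidity gives `2 ‖w‖ ≤ ‖u + w‖`, so `u` and `w` are vectors of equal
norm for which the triangle inequality is an equality. Strict convexity forces `u = w`, which
fails at `β`.
-/

open Classical in
/-- The unit vector (indicator of `{γ}`) in the space of real functions on `Γ`. -/
noncomputable def eVec {Γ : Type*} (γ : Γ) : Γ → ℝ := fun δ => if δ = γ then 1 else 0

section SolidLattice

variable {Γ X : Type*} [NormedAddCommGroup X] [NormedSpace ℝ X] {T : X →ₗ[ℝ] (Γ → ℝ)}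

theorem norm_le_of_abs_apply_le (hT : Function.Injective T)
    (hsolid : ∀ (x : X) (g : Γ → ℝ), (∀ γ, |g γ| ≤ |T x γ|) → ∃ y : X, T y = g ∧ ‖y‖ ≤ ‖x‖)
    {x y : X} (h : ∀ γ, |T y γ| ≤ |T x γ|) : ‖y‖ ≤ ‖x‖ := by
  obtain ⟨y', hy', hy'x⟩ := hsolid x (T y) h
  rwa [hT hy'] at hy'x

theorem exists_apply_eq_abs_and_norm_eq (hT : Function.Injective T)
    (hsolid : ∀ (x : X) (g : Γ → ℝ), (∀ γ, |g γ| ≤ |T x γ|) → ∃ y : X, T y = g ∧ ‖y‖ ≤ ‖x‖)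
    (x : X) : ∃ u : X, (∀ γ, T u γ = |T x γ|) ∧ ‖u‖ = ‖x‖ := by
  obtain ⟨u, hu, -⟩ := hsolid x (fun γ => |T x γ|) fun γ => (abs_abs _).le
  have habs γ : |T u γ| = |T x γ| := by rw [hu, abs_abs]
  exact ⟨u, congrFun hu, le_antisymm (norm_le_of_abs_apply_le hT hsolid fun γ => (habs γ).le)
    (norm_le_of_abs_apply_le hT hsolid fun γ => (habs γ).ge)⟩

end SolidLattice

theorem StrictConvexSpace.of_norm_add_eq_two {X : Type*} [NormedAddCommGroup X] [NormedSpace ℝ X]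
    (h : ∀ x y : X, ‖x‖ = 1 → ‖y‖ = 1 → ‖x + y‖ = 2 → x = y) : StrictConvexSpace ℝ X :=
  .of_norm_add fun x y hx hy hxy => h x y hx hy hxy ▸ SameRay.refl x

theorem strictlyConvex_implies_strictlyMonotone_general
    {Γ : Type*} {X : Type*} [NormedAddCommGroup X] [NormedSpace ℝ X]
    (T : X →ₗ[ℝ] (Γ → ℝ)) (hT : Function.Injective T)
    (hsolid : ∀ (x : X) (g : Γ → ℝ), (∀ γ, |g γ| ≤ |T x γ|) →
      ∃ y : X, T y = g ∧ ‖y‖ ≤ ‖x‖)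
    (hSC : ∀ x y : X, ‖x‖ = 1 → ‖y‖ = 1 → ‖x + y‖ = 2 → x = y)
    (x y : X) (hle : ∀ γ, |T y γ| ≤ |T x γ|) (hlt : ∃ β, |T y β| < |T x β|) :
    ‖y‖ < ‖x‖ := by
  have := StrictConvexSpace.of_norm_add_eq_two hSC
  obtain ⟨β, hβ⟩ := hlt
  refine (norm_le_of_abs_apply_le hT hsolid hle).lt_of_ne fun hyx => hβ.ne ?_
  obtain ⟨u, hTu, hu⟩ := exists_apply_eq_abs_and_norm_eq hT hsolid x
  obtain ⟨w, hTw, hw⟩ := exists_apply_eq_abs_and_norm_eq hT hsolid y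
  have hsum : ‖(2 : ℝ) • w‖ ≤ ‖u + w‖ := norm_le_of_abs_apply_le hT hsolid fun γ => by
    simp only [map_smul, map_add, Pi.smul_apply, Pi.add_apply, smul_eq_mul, hTu, hTw, abs_mul,
      abs_abs, abs_two]
    linarith [hle γ, le_abs_self (|T x γ| + |T y γ|)]
  have huw : u = w := by
    refine eq_of_norm_eq_of_norm_add_eq (by rw [hu, hw, hyx]) (le_antisymm (norm_add_le u w) ?_)
    rw [norm_smul, Real.norm_two] at hsum
    linarith
  rw [← hTu, ← hTw, huw]

/-- A solid Banach lattice of real functions on `Γ`, given by an injective linear map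
`T : X → (Γ → ℝ)`: if the norm is strictly convex, then it is strictly monotone. -/
theorem strictlyConvex_implies_strictlyMonotone
    {Γ : Type*} {X : Type*} [NormedAddCommGroup X] [NormedSpace ℝ X] [CompleteSpace X]
    (T : X →ₗ[ℝ] (Γ → ℝ)) (hT : Function.Injective T)
    (hsolid : ∀ (x : X) (g : Γ → ℝ), (∀ γ, |g γ| ≤ |T x γ|) →
      ∃ y : X, T y = g ∧ ‖y‖ ≤ ‖x‖)
    (hunit : ∀ γ : Γ, ∃ e : X, T e = eVec γ ∧ ‖e‖ = 1)
    (hSC : ∀ x y : X, ‖x‖ = 1 → ‖y‖ = 1 → ‖x + y‖ = 2 → x = y)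
    (x y : X) (hle : ∀ γ, |T y γ| ≤ |T x γ|) (hlt : ∃ β, |T y β| < |T x β|) :
    ‖y‖ < ‖x‖ :=
  strictlyConvex_implies_strictlyMonotone_general T hT hsolid hSC x y hle hlt
end

section
/- Let X be a solid Banach lattice of real functions on a set Γ, given by an injective linear map T : X → (Γ → ℝ), and for each γ ∈ Γ let e_γ ∈ X be the (unique) element with T e_γ equal to the indicator of {γ}. Suppose X is uniformly strictly monotone at some α ∈ Γ, i.e. there exist ε > 0 and s < 1 such that every x ∈ X with ‖x‖ = 1 and (T x)(α) > 1 − ε satisfies ‖x − (T x)(α) · e_α‖ ≤ s. Then X fails the local diameter two property: there exist a continuous linear functional f on X with operator norm 1, a δ > 0, and a d < 2 such that ‖u − v‖ ≤ d whenever u, v ∈ X satisfy ‖u‖ ≤ 1, ‖v‖ ≤ 1, f(u) > 1 − δ and f(v) > 1 − δ. -/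
/-- If a solid Banach lattice of real functions on `Γ` is uniformly strictly monotone at
some `α ∈ Γ`, then it fails the local diameter two property: some slice of the unit ball
has diameter strictly less than 2. -/
theorem uniformlyStrictlyMonotone_fails_LD2P
    {Γ : Type*} {X : Type*} [NormedAddCommGroup X] [NormedSpace ℝ X] [CompleteSpace X]
    (T : X →ₗ[ℝ] (Γ → ℝ)) (hT : Function.Injective T)
    (hsolid : ∀ (x : X) (g : Γ → ℝ), (∀ γ, |g γ| ≤ |T x γ|) →
      ∃ y : X, T y = g ∧ ‖y‖ ≤ ‖x‖)
    (hunit : ∀ γ : Γ, ∃ e : X, T e = eVec γ ∧ ‖e‖ = 1)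
    (α : Γ) (e : X) (heT : T e = eVec α) (hene : ‖e‖ = 1)
    (ε s : ℝ) (hε : 0 < ε) (hs : s < 1)
    (husm : ∀ x : X, ‖x‖ = 1 → 1 - ε < T x α → ‖x - (T x α) • e‖ ≤ s) :
    ∃ f : X →L[ℝ] ℝ, ‖f‖ = 1 ∧
      ∃ δ : ℝ, 0 < δ ∧ ∃ d : ℝ, d < 2 ∧
        ∀ u v : X, ‖u‖ ≤ 1 → ‖v‖ ≤ 1 → 1 - δ < f u → 1 - δ < f v → ‖u - v‖ ≤ d := by
  classical
  -- evaluation at α is bounded by solidity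
  have hbound : ∀ x : X, |T x α| ≤ ‖x‖ := by
    intro x
    obtain ⟨y, hy, hny⟩ := hsolid x (fun γ => T x α * eVec α γ) (by
      intro γ
      by_cases h : γ = α
      · subst h; simp [eVec]
      · simp [eVec, h])
    have hTy : T y = T ((T x α) • e) := by
      rw [hy, map_smul, heT]
      funext γ; simp [eVec, mul_comm]
    have hyx : y = (T x α) • e := hT hTy
    rw [hyx] at hny
    rw [norm_smul, hene, mul_one] at hny
    simpa using hny
  set f : X →L[ℝ] ℝ :=
    LinearMap.mkContinuous ((LinearMap.proj α).comp T) 1 (by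
      intro x; simpa using hbound x) with hf
  have hfx : ∀ x : X, f x = T x α := fun x => rfl
  have hfe : f e = 1 := by simp [hfx, heT, eVec]
  have hfnorm : ‖f‖ = 1 := by
    apply le_antisymm
    · exact LinearMap.mkContinuous_norm_le _ zero_le_one _
    · have := f.le_opNorm e
      rw [hfe, hene, mul_one] at this
      simpa using this
  have hs0 : 0 ≤ s := by
    have := husm e hene (by rw [heT]; simp [eVec]; linarith)
    rw [heT] at this
    simpa [eVec] using this
  refine ⟨f, hfnorm, min ε ((1 - s) / 2), lt_min hε (by linarith), 2 * s + min ε ((1 - s) / 2),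
    ?_, ?_⟩
  · have : min ε ((1 - s) / 2) ≤ (1 - s) / 2 := min_le_right _ _
    linarith
  set δ := min ε ((1 - s) / 2) with hδdef
  have hδε : δ ≤ ε := min_le_left _ _
  have hδhalf : δ ≤ (1 - s) / 2 := min_le_right _ _
  have key : ∀ u : X, ‖u‖ ≤ 1 → 1 - δ < f u → ‖u - (f u) • e‖ ≤ s := by
    intro u hu hfu
    have hfu0 : 0 < f u := by
      have : δ < 1 := by linarith
      linarith
    have hun : 0 < ‖u‖ := lt_of_lt_of_le hfu0 (by rw [hfx]; exact le_trans (le_abs_self _) (hbound u))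
    set x := ‖u‖⁻¹ • u with hxdef
    have hxn : ‖x‖ = 1 := by
      rw [hxdef, norm_smul, norm_inv, norm_norm, inv_mul_cancel₀ hun.ne']
    have hTx : T x α = ‖u‖⁻¹ * f u := by
      rw [hxdef, map_smul]; rfl
    have hTxge : f u ≤ T x α := by
      rw [hTx]
      nth_rewrite 1 [← one_mul (f u)]
      exact mul_le_mul_of_nonneg_right
        ((one_le_inv_iff₀.mpr ⟨hun, hu⟩)) hfu0.le
    have hTxε : 1 - ε < T x α := lt_of_lt_of_le (by linarith) hTxge
    have hkey := husm x hxn hTxε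
    have heq : u - (f u) • e = ‖u‖ • (x - (T x α) • e) := by
      rw [smul_sub, hxdef, smul_smul, mul_inv_cancel₀ hun.ne', one_smul,
        hTx, smul_smul, ← mul_assoc, mul_inv_cancel₀ hun.ne', one_mul]
    calc ‖u - (f u) • e‖ = ‖u‖ * ‖x - (T x α) • e‖ := by rw [heq, norm_smul, norm_norm]
      _ ≤ 1 * s := mul_le_mul hu hkey (norm_nonneg _) zero_le_one
      _ = s := one_mul s
  intro u v hu hv hfu hfv
  have h1 := key u hu hfu
  have h2 := key v hv hfv
  have hfub : f u ≤ 1 := le_trans (by rw [hfx]; exact le_trans (le_abs_self _) (hbound u)) hu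
  have hfvb : f v ≤ 1 := le_trans (by rw [hfx]; exact le_trans (le_abs_self _) (hbound v)) hv
  have hdiff : ‖(f u) • e - (f v) • e‖ ≤ δ := by
    rw [← sub_smul, norm_smul, hene, mul_one]
    rw [Real.norm_eq_abs, abs_le]
    constructor <;> linarith
  calc ‖u - v‖ = ‖(u - (f u) • e) + ((f u) • e - (f v) • e) + ((f v) • e - v)‖ := by
        congr 1; abel
      _ ≤ ‖(u - (f u) • e) + ((f u) • e - (f v) • e)‖ + ‖(f v) • e - v‖ := norm_add_le _ _
      _ ≤ ‖u - (f u) • e‖ + ‖(f u) • e - (f v) • e‖ + ‖(f v) • e - v‖ := by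
        have := norm_add_le (u - (f u) • e) ((f u) • e - (f v) • e)
        linarith
      _ ≤ s + δ + s := by
        have h2' : ‖(f v) • e - v‖ ≤ s := by rw [norm_sub_rev]; exact h2
        linarith
      _ = 2 * s + δ := by ring
end

section
/- Let Γ be a nonempty set and let N be an equivalent norm on c₀(Γ) that is solid, strictly monotone, and normalized (N(e_γ) = 1 for all γ ∈ Γ). Let L := sup{ N(1_A) : A a nonempty finite subset of Γ }, where 1_A ∈ c₀(Γ) is the indicator function of A. If there exist α ∈ Γ and l > 1 such that N(e_α + (1/L)·e_β) ≥ l for every β ∈ Γ with β ≠ α, then N fails the local diameter two property: there exist a linear functional f : c₀(Γ) → ℝ with sup{ f(x) : N(x) ≤ 1 } = 1, a δ > 0, and a d < 2, such that N(u − v) ≤ d whenever N(u) ≤ 1, N(v) ≤ 1, f(u) > 1 − δ and f(v) > 1 − δ. -/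
open Classical in
/-- The indicator function of a finite subset `A` of `Γ`. -/
noncomputable def indFinset {Γ : Type*} (A : Finset Γ) : Γ → ℝ :=
  fun γ => if γ ∈ A then 1 else 0

/-- Membership in `c₀(Γ)`: functions vanishing at infinity. -/
def IsC0 {Γ : Type*} (x : Γ → ℝ) : Prop := ∀ ε : ℝ, 0 < ε → {γ | ε ≤ |x γ|}.Finite

/-- The supremum norm of a function on `Γ`. -/
noncomputable def supNorm {Γ : Type*} (x : Γ → ℝ) : ℝ := ⨆ γ, |x γ|

open Filter Topology

section C0

variable {Γ : Type*}

lemma isC0_iff_tendsto {x : Γ → ℝ} : IsC0 x ↔ Tendsto x cofinite (𝓝 0) := by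
  simp only [IsC0, Metric.tendsto_nhds, eventually_cofinite, Real.dist_eq, sub_zero, not_lt]

lemma IsC0.add {x y : Γ → ℝ} (hx : IsC0 x) (hy : IsC0 y) : IsC0 (x + y) := by
  rw [isC0_iff_tendsto] at *
  exact add_zero (0 : ℝ) ▸ hx.add hy

lemma IsC0.smul {x : Γ → ℝ} (a : ℝ) (hx : IsC0 x) : IsC0 (a • x) := by
  rw [isC0_iff_tendsto] at *
  exact smul_zero (A := ℝ) a ▸ hx.const_smul a

lemma IsC0.sub {x y : Γ → ℝ} (hx : IsC0 x) (hy : IsC0 y) : IsC0 (x - y) := by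
  simpa [sub_eq_add_neg] using hx.add (hy.smul (-1))

lemma isC0_of_finite_support {x : Γ → ℝ} (h : (Function.support x).Finite) : IsC0 x :=
  isC0_iff_tendsto.2 <| tendsto_nhds_of_eventually_eq <|
    h.eventually_cofinite_notMem.mono fun _ => Function.notMem_support.1

lemma isC0_zero : IsC0 (0 : Γ → ℝ) :=
  isC0_of_finite_support (by simp)

lemma isC0_indicator_finset (F : Finset Γ) (x : Γ → ℝ) : IsC0 ((F : Set Γ).indicator x) :=
  isC0_of_finite_support <| F.finite_toSet.subset Set.support_indicator_subset

lemma indFinset_eq_indicator (A : Finset Γ) : indFinset A = (A : Set Γ).indicator 1 := by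
  classical
  funext γ
  simp [indFinset, Set.indicator_apply]

lemma eVec_eq_indFinset (γ : Γ) : eVec γ = indFinset {γ} := by
  classical
  funext δ
  simp [eVec, indFinset]

lemma isC0_indFinset (A : Finset Γ) : IsC0 (indFinset A) := by
  rw [indFinset_eq_indicator]
  exact isC0_indicator_finset A 1

lemma isC0_eVec (γ : Γ) : IsC0 (eVec γ) := by
  rw [eVec_eq_indFinset]
  exact isC0_indFinset _

lemma supNorm_nonneg (x : Γ → ℝ) : 0 ≤ supNorm x :=
  Real.iSup_nonneg fun _ => abs_nonneg _

lemma supNorm_le {x : Γ → ℝ} {r : ℝ} (hr : 0 ≤ r) (h : ∀ γ, |x γ| ≤ r) : supNorm x ≤ r :=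
  Real.iSup_le h hr

lemma IsC0.abs_le_supNorm {x : Γ → ℝ} (hx : IsC0 x) (γ : Γ) : |x γ| ≤ supNorm x :=
  le_ciSup (isC0_iff_tendsto.1 hx).abs.bddAbove_range_of_cofinite γ

lemma supNorm_indFinset_le (A : Finset Γ) : supNorm (indFinset A) ≤ 1 :=
  supNorm_le zero_le_one fun γ => by
    rw [indFinset_eq_indicator]
    by_cases hγ : γ ∈ (A : Set Γ) <;> simp [hγ]

end C0

/-- The constant `L` of the statement. -/
noncomputable def finiteIndicatorSup {Γ : Type*} (N : (Γ → ℝ) → ℝ) : ℝ :=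
  sSup {r : ℝ | ∃ A : Finset Γ, A.Nonempty ∧ r = N (indFinset A)}

section SolidNorm

variable {Γ : Type*} {N : (Γ → ℝ) → ℝ}

lemma map_zero_of_smul (hsmul : ∀ (a : ℝ) (x : Γ → ℝ), IsC0 x → N (a • x) = |a| * N x) :
    N 0 = 0 := by
  simpa using hsmul 0 0 isC0_zero

lemma abs_apply_le_of_solid (hsmul : ∀ (a : ℝ) (x : Γ → ℝ), IsC0 x → N (a • x) = |a| * N x)
    (hsolid : ∀ x y : Γ → ℝ, IsC0 x → IsC0 y → (∀ γ, |x γ| ≤ |y γ|) → N x ≤ N y)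
    {γ : Γ} (hγ : N (eVec γ) = 1) {x : Γ → ℝ} (hx : IsC0 x) : |x γ| ≤ N x := by
  have hle : N (x γ • eVec γ) ≤ N x := hsolid _ _ ((isC0_eVec γ).smul _) hx fun δ => by
    by_cases h : δ = γ <;> simp [eVec, h]
  rwa [hsmul _ _ (isC0_eVec γ), hγ, mul_one] at hle

lemma bddAbove_finiteIndicator {C : ℝ} (hC0 : 0 ≤ C)
    (hC : ∀ x : Γ → ℝ, IsC0 x → N x ≤ C * supNorm x) :
    BddAbove {r : ℝ | ∃ A : Finset Γ, A.Nonempty ∧ r = N (indFinset A)} := by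
  refine ⟨C, ?_⟩
  rintro r ⟨A, -, rfl⟩
  calc N (indFinset A) ≤ C * supNorm (indFinset A) := hC _ (isC0_indFinset A)
    _ ≤ C * 1 := by gcongr; exact supNorm_indFinset_le A
    _ = C := mul_one C

lemma norm_indFinset_le_finiteIndicatorSup
    (hbdd : BddAbove {r : ℝ | ∃ A : Finset Γ, A.Nonempty ∧ r = N (indFinset A)})
    {A : Finset Γ} (hA : A.Nonempty) : N (indFinset A) ≤ finiteIndicatorSup N :=
  le_csSup hbdd ⟨A, hA, rfl⟩

lemma one_le_finiteIndicatorSup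
    (hbdd : BddAbove {r : ℝ | ∃ A : Finset Γ, A.Nonempty ∧ r = N (indFinset A)})
    {γ : Γ} (hγ : N (eVec γ) = 1) : 1 ≤ finiteIndicatorSup N := by
  rw [← hγ, eVec_eq_indFinset]
  exact norm_indFinset_le_finiteIndicatorSup hbdd (Finset.singleton_nonempty γ)

lemma norm_indicator_le_mul_supNorm
    (hsmul : ∀ (a : ℝ) (x : Γ → ℝ), IsC0 x → N (a • x) = |a| * N x)
    (hsolid : ∀ x y : Γ → ℝ, IsC0 x → IsC0 y → (∀ γ, |x γ| ≤ |y γ|) → N x ≤ N y)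
    {L : ℝ} (hL0 : 0 ≤ L) (hind : ∀ A : Finset Γ, A.Nonempty → N (indFinset A) ≤ L)
    {y : Γ → ℝ} (hy : IsC0 y) (F : Finset Γ) :
    N ((F : Set Γ).indicator y) ≤ L * supNorm y := by
  rcases F.eq_empty_or_nonempty with rfl | hF
  · rw [Finset.coe_empty, Set.indicator_empty', map_zero_of_smul hsmul]
    exact mul_nonneg hL0 (supNorm_nonneg y)
  have hdom : ∀ γ, |(F : Set Γ).indicator y γ| ≤ |(supNorm y • indFinset F) γ| := fun γ => by
    rw [indFinset_eq_indicator]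
    by_cases hγ : γ ∈ (F : Set Γ)
    · simpa [hγ, abs_of_nonneg (supNorm_nonneg y)] using hy.abs_le_supNorm γ
    · simp [hγ]
  calc N ((F : Set Γ).indicator y) ≤ N (supNorm y • indFinset F) :=
        hsolid _ _ (isC0_indicator_finset F y) ((isC0_indFinset F).smul _) hdom
    _ = supNorm y * N (indFinset F) := by
        rw [hsmul _ _ (isC0_indFinset F), abs_of_nonneg (supNorm_nonneg y)]
    _ ≤ L * supNorm y := by
        rw [mul_comm]; exact mul_le_mul_of_nonneg_right (hind F hF) (supNorm_nonneg y)

/-- The finitely many coordinates of `y` of size at least `ε / C` are handled by solidity and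
the definition of `L`; the remaining tail has sup norm at most `ε / C`. -/
lemma norm_le_mul_supNorm
    (hsmul : ∀ (a : ℝ) (x : Γ → ℝ), IsC0 x → N (a • x) = |a| * N x)
    (htri : ∀ x y : Γ → ℝ, IsC0 x → IsC0 y → N (x + y) ≤ N x + N y)
    (hsolid : ∀ x y : Γ → ℝ, IsC0 x → IsC0 y → (∀ γ, |x γ| ≤ |y γ|) → N x ≤ N y)
    {C : ℝ} (hC0 : 0 < C) (hC : ∀ x : Γ → ℝ, IsC0 x → N x ≤ C * supNorm x)
    {L : ℝ} (hL0 : 0 ≤ L) (hind : ∀ A : Finset Γ, A.Nonempty → N (indFinset A) ≤ L)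
    {y : Γ → ℝ} (hy : IsC0 y) : N y ≤ L * supNorm y := by
  refine le_of_forall_pos_le_add fun ε hε => ?_
  have hε' : 0 < ε / C := div_pos hε hC0
  set F := (hy (ε / C) hε').toFinset
  set head := (F : Set Γ).indicator y
  have htail : supNorm (y - head) ≤ ε / C := supNorm_le hε'.le fun γ => by
    by_cases hγ : γ ∈ F
    · simp [head, hγ, hε'.le]
    · have : ¬ ε / C ≤ |y γ| := by simpa [F] using hγ
      simpa [head, hγ] using (not_le.1 this).le
  calc N y = N (head + (y - head)) := by rw [add_sub_cancel]
    _ ≤ N head + N (y - head) :=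
        htri _ _ (isC0_indicator_finset F y) (hy.sub (isC0_indicator_finset F y))
    _ ≤ L * supNorm y + C * (ε / C) := add_le_add
        (norm_indicator_le_mul_supNorm hsmul hsolid hL0 hind hy F)
        ((hC _ (hy.sub (isC0_indicator_finset F y))).trans (by gcongr))
    _ = L * supNorm y + ε := by rw [mul_div_cancel₀ _ hC0.ne']

lemma abs_apply_le_of_norm_lt
    (hsmul : ∀ (a : ℝ) (x : Γ → ℝ), IsC0 x → N (a • x) = |a| * N x)
    (hsolid : ∀ x y : Γ → ℝ, IsC0 x → IsC0 y → (∀ γ, |x γ| ≤ |y γ|) → N x ≤ N y)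
    {α β : Γ} (hβ : β ≠ α) {s t : ℝ} (hs : 0 ≤ s) (ht : 0 ≤ t) {x : Γ → ℝ} (hx : IsC0 x)
    (hxα : t ≤ |x α|) (hN : N x < t * N (eVec α + s • eVec β)) : |x β| ≤ t * s := by
  by_contra! hxβ
  have hv : IsC0 (eVec α + s • eVec β) := (isC0_eVec α).add ((isC0_eVec β).smul s)
  have hdom : ∀ γ, |(t • (eVec α + s • eVec β)) γ| ≤ |x γ| := fun γ => by
    by_cases hγα : γ = α
    · subst hγα; simpa [eVec, hβ.symm, abs_of_nonneg ht] using hxα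
    by_cases hγβ : γ = β
    · subst hγβ; simpa [eVec, hγα, abs_of_nonneg (mul_nonneg ht hs)] using hxβ.le
    · simp [eVec, hγα, hγβ]
  have := hsolid _ _ (hv.smul t) hx hdom
  rw [hsmul _ _ hv, abs_of_nonneg ht] at this
  linarith

lemma norm_le_abs_apply_add
    (hsmul : ∀ (a : ℝ) (x : Γ → ℝ), IsC0 x → N (a • x) = |a| * N x)
    (htri : ∀ x y : Γ → ℝ, IsC0 x → IsC0 y → N (x + y) ≤ N x + N y)
    {α : Γ} (hα : N (eVec α) = 1)
    {L : ℝ} (hL0 : 0 ≤ L) (hNL : ∀ y : Γ → ℝ, IsC0 y → N y ≤ L * supNorm y)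
    {x : Γ → ℝ} (hx : IsC0 x) {b : ℝ} (hb0 : 0 ≤ b) (hb : ∀ β, β ≠ α → |x β| ≤ b) :
    N x ≤ |x α| + L * b := by
  have hα' : IsC0 (x α • eVec α) := (isC0_eVec α).smul _
  have hrest : supNorm (x - x α • eVec α) ≤ b := supNorm_le hb0 fun β => by
    by_cases hβ : β = α
    · subst hβ; simpa [eVec] using hb0
    · simpa [eVec, hβ] using hb β hβ
  calc N x = N (x α • eVec α + (x - x α • eVec α)) := by rw [add_sub_cancel]
    _ ≤ N (x α • eVec α) + N (x - x α • eVec α) := htri _ _ hα' (hx.sub hα')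
    _ ≤ |x α| + L * b := by
        rw [hsmul _ _ (isC0_eVec α), hα, mul_one]
        gcongr
        exact (hNL _ (hx.sub hα')).trans (by gcongr)

lemma sSup_apply_unitBall_eq_one
    (hsmul : ∀ (a : ℝ) (x : Γ → ℝ), IsC0 x → N (a • x) = |a| * N x)
    (hsolid : ∀ x y : Γ → ℝ, IsC0 x → IsC0 y → (∀ γ, |x γ| ≤ |y γ|) → N x ≤ N y)
    {α : Γ} (hα : N (eVec α) = 1) :
    sSup {r : ℝ | ∃ x : Γ → ℝ, IsC0 x ∧ N x ≤ 1 ∧ x α = r} = 1 := by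
  have hmem : (1 : ℝ) ∈ {r : ℝ | ∃ x : Γ → ℝ, IsC0 x ∧ N x ≤ 1 ∧ x α = r} :=
    ⟨eVec α, isC0_eVec α, hα.le, by simp [eVec]⟩
  have hub : ∀ r ∈ {r : ℝ | ∃ x : Γ → ℝ, IsC0 x ∧ N x ≤ 1 ∧ x α = r}, r ≤ 1 := by
    rintro r ⟨x, hx, hNx, rfl⟩
    exact (le_abs_self _).trans ((abs_apply_le_of_solid hsmul hsolid hα hx).trans hNx)
  exact le_antisymm (csSup_le ⟨1, hmem⟩ hub) (le_csSup ⟨1, hub⟩ hmem)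

lemma norm_sub_le_one_add_of_lt_apply
    (hsmul : ∀ (a : ℝ) (x : Γ → ℝ), IsC0 x → N (a • x) = |a| * N x)
    (htri : ∀ x y : Γ → ℝ, IsC0 x → IsC0 y → N (x + y) ≤ N x + N y)
    (hsolid : ∀ x y : Γ → ℝ, IsC0 x → IsC0 y → (∀ γ, |x γ| ≤ |y γ|) → N x ≤ N y)
    {α : Γ} (hα : N (eVec α) = 1)
    {L : ℝ} (hL0 : 0 < L) (hNL : ∀ y : Γ → ℝ, IsC0 y → N y ≤ L * supNorm y)
    {t : ℝ} (ht : 0 ≤ t) (hfar : ∀ β, β ≠ α → 1 < t * N (eVec α + (1 / L) • eVec β))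
    {u v : Γ → ℝ} (hu : IsC0 u) (hv : IsC0 v) (hNu : N u ≤ 1) (hNv : N v ≤ 1)
    (hut : t < u α) (hvt : t < v α) : N (u - v) ≤ 1 + t := by
  have hsmall : ∀ x : Γ → ℝ, IsC0 x → N x ≤ 1 → t < x α →
      ∀ β, β ≠ α → |x β| ≤ t * (1 / L) :=
    fun x hx hNx hxt β hβ => abs_apply_le_of_norm_lt hsmul hsolid hβ (by positivity) ht hx
      (hxt.le.trans (le_abs_self _)) (hNx.trans_lt (hfar β hβ))
  have hcoord : ∀ x : Γ → ℝ, IsC0 x → N x ≤ 1 → x α ≤ 1 :=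
    fun x hx hNx => (le_abs_self _).trans ((abs_apply_le_of_solid hsmul hsolid hα hx).trans hNx)
  have hdiff : |u α - v α| ≤ 1 - t := by
    rw [abs_le]
    constructor <;> linarith [hcoord u hu hNu, hcoord v hv hNv]
  calc N (u - v) ≤ |u α - v α| + L * (2 * (t * (1 / L))) :=
        norm_le_abs_apply_add hsmul htri hα hL0.le hNL (hu.sub hv) (by positivity)
          fun β hβ => (abs_sub _ _).trans (by
            linarith [hsmall u hu hNu hut β hβ, hsmall v hv hNv hvt β hβ])
    _ = |u α - v α| + 2 * t := by field_simp
    _ ≤ 1 + t := by linarith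

end SolidNorm

theorem strictlyMonotone_c0_fails_LD2P_general
    {Γ : Type*} (N : (Γ → ℝ) → ℝ)
    (hsmul : ∀ (a : ℝ) (x : Γ → ℝ), IsC0 x → N (a • x) = |a| * N x)
    (htri : ∀ x y : Γ → ℝ, IsC0 x → IsC0 y → N (x + y) ≤ N x + N y)
    (hequiv : ∃ c C : ℝ, 0 < c ∧ 0 < C ∧ ∀ x : Γ → ℝ, IsC0 x →
      c * supNorm x ≤ N x ∧ N x ≤ C * supNorm x)
    (hsolid : ∀ x y : Γ → ℝ, IsC0 x → IsC0 y → (∀ γ, |x γ| ≤ |y γ|) → N x ≤ N y)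
    (hnormalized : ∀ γ : Γ, N (eVec γ) = 1)
    (L : ℝ)
    (hL : L = sSup {r : ℝ | ∃ A : Finset Γ, A.Nonempty ∧ r = N (indFinset A)})
    (α : Γ) (l : ℝ) (hl : 1 < l)
    (hinf : ∀ β : Γ, β ≠ α → l ≤ N (eVec α + (1 / L) • eVec β)) :
    ∃ f : (Γ → ℝ) →ₗ[ℝ] ℝ,
      sSup {r : ℝ | ∃ x : Γ → ℝ, IsC0 x ∧ N x ≤ 1 ∧ f x = r} = 1 ∧
      ∃ δ : ℝ, 0 < δ ∧ ∃ d : ℝ, d < 2 ∧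
        ∀ u v : Γ → ℝ, IsC0 u → IsC0 v → N u ≤ 1 → N v ≤ 1 →
          1 - δ < f u → 1 - δ < f v → N (u - v) ≤ d := by
  obtain ⟨_, C, -, hC0, hC⟩ := hequiv
  have hbdd := bddAbove_finiteIndicator hC0.le fun x hx => (hC x hx).2
  rw [← finiteIndicatorSup] at hL
  have hL1 : 1 ≤ L := hL ▸ one_le_finiteIndicatorSup hbdd (hnormalized α)
  have hNL : ∀ y : Γ → ℝ, IsC0 y → N y ≤ L * supNorm y := hL ▸
    fun y => norm_le_mul_supNorm hsmul htri hsolid hC0 (fun x hx => (hC x hx).2) (by linarith)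
      (fun A => norm_indFinset_le_finiteIndicatorSup hbdd)
  refine ⟨LinearMap.proj α, sSup_apply_unitBall_eq_one hsmul hsolid (hnormalized α), ?_⟩
  set δ := (l - 1) / (2 * l)
  have hδ : 0 < δ ∧ δ < 1 := by
    constructor
    · exact div_pos (by linarith) (by linarith)
    · rw [div_lt_one (by linarith)]; linarith
  have hfar : ∀ β, β ≠ α → 1 < (1 - δ) * N (eVec α + (1 / L) • eVec β) := by
    intro β hβ
    have : (1 - δ) * l = (l + 1) / 2 := by simp only [δ]; field_simp; ring
    calc 1 < (1 - δ) * l := by linarith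
      _ ≤ (1 - δ) * N (eVec α + (1 / L) • eVec β) := by gcongr; exacts [by linarith, hinf β hβ]
  refine ⟨δ, hδ.1, 2 - δ, by linarith, fun u v hu hv hNu hNv hfu hfv => ?_⟩
  have := norm_sub_le_one_add_of_lt_apply hsmul htri hsolid (hnormalized α) (by linarith) hNL
    (by linarith) hfar hu hv hNu hNv hfu hfv
  linarith

/-- Let `N` be an equivalent norm on `c₀(Γ)` that is solid, strictly monotone, and
normalized, let `L` be the supremum of `N` over indicators of nonempty finite sets.
If there are `α ∈ Γ` and `l > 1` such that `N (e_α + (1/L) e_β) ≥ l` for all `β ≠ α`,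
then `N` fails the local diameter two property. -/
theorem strictlyMonotone_c0_fails_LD2P
    {Γ : Type*} [Nonempty Γ] (N : (Γ → ℝ) → ℝ)
    (hzero : ∀ x : Γ → ℝ, IsC0 x → (N x = 0 ↔ x = 0))
    (hsmul : ∀ (a : ℝ) (x : Γ → ℝ), IsC0 x → N (a • x) = |a| * N x)
    (htri : ∀ x y : Γ → ℝ, IsC0 x → IsC0 y → N (x + y) ≤ N x + N y)
    (hequiv : ∃ c C : ℝ, 0 < c ∧ 0 < C ∧ ∀ x : Γ → ℝ, IsC0 x →
      c * supNorm x ≤ N x ∧ N x ≤ C * supNorm x)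
    (hsolid : ∀ x y : Γ → ℝ, IsC0 x → IsC0 y → (∀ γ, |x γ| ≤ |y γ|) → N x ≤ N y)
    (hsm : ∀ x y : Γ → ℝ, IsC0 x → IsC0 y → (∀ γ, |y γ| ≤ |x γ|) →
      (∃ β, |y β| < |x β|) → N y < N x)
    (hnormalized : ∀ γ : Γ, N (eVec γ) = 1)
    (L : ℝ)
    (hL : L = sSup {r : ℝ | ∃ A : Finset Γ, A.Nonempty ∧ r = N (indFinset A)})
    (α : Γ) (l : ℝ) (hl : 1 < l)
    (hinf : ∀ β : Γ, β ≠ α → l ≤ N (eVec α + (1 / L) • eVec β)) :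
    ∃ f : (Γ → ℝ) →ₗ[ℝ] ℝ,
      sSup {r : ℝ | ∃ x : Γ → ℝ, IsC0 x ∧ N x ≤ 1 ∧ f x = r} = 1 ∧
      ∃ δ : ℝ, 0 < δ ∧ ∃ d : ℝ, d < 2 ∧
        ∀ u v : Γ → ℝ, IsC0 u → IsC0 v → N u ≤ 1 → N v ≤ 1 →
          1 - δ < f u → 1 - δ < f v → N (u - v) ≤ d :=
  strictlyMonotone_c0_fails_LD2P_general N hsmul htri hequiv hsolid hnormalized L hL α l hl hinf
end

section
/- Let N be the Nakano norm on c₀(ℕ), defined by N(x) = inf{ λ > 0 : Σ_{n=1}^∞ (|x_n|/λ)^{2n} ≤ 1 }. Then for every index j and every r with 0 < r < 1, one has inf{ N(e_j + r·e_n) : n ∈ ℕ, n ≠ j } = 1; that is, N(e_j + r·e_n) ≥ 1 for every n ≠ j, and for every ε > 0 there exists n ≠ j with N(e_j + r·e_n) < 1 + ε. -/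
/-- The Nakano norm on `c₀(ℕ)`:
`N(x) = inf { λ > 0 : Σ_{n=1}^∞ (|x_n|/λ)^{2n} ≤ 1 }`, where the Lean coordinate
`n : ℕ` plays the role of the paper's coordinate `n + 1`. -/
noncomputable def nakanoNorm (x : ℕ → ℝ) : ℝ :=
  sInf {l : ℝ | 0 < l ∧ ∑' n : ℕ, (|x n| / l) ^ (2 * (n + 1)) ≤ 1}

/-- The Nakano sum of `e_j + r e_n` has exactly two nonzero terms. -/
lemma nakano_tsum (j n : ℕ) (hn : n ≠ j) (r l : ℝ) (hr : 0 ≤ r) :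
    ∑' k : ℕ, (|(eVec j + r • eVec n) k| / l) ^ (2 * (k + 1)) =
      (1 / l) ^ (2 * (j + 1)) + (r / l) ^ (2 * (n + 1)) := by
  have h0 : ∀ k ∉ ({j, n} : Finset ℕ),
      (|(eVec j + r • eVec n) k| / l) ^ (2 * (k + 1)) = 0 := by
    intro k hk
    simp only [Finset.mem_insert, Finset.mem_singleton, not_or] at hk
    simp [eVec, hk.1, hk.2]
  rw [tsum_eq_sum h0, Finset.sum_pair (Ne.symm hn)]
  simp [eVec, hn, Ne.symm hn, abs_of_nonneg hr]

/-- For the Nakano norm on `c₀(ℕ)`, for every index `j` and every `0 < r < 1` one has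
`inf { N(e_j + r e_n) : n ≠ j } = 1`: every such vector has norm at least `1`, and the
norms come arbitrarily close to `1`. -/
theorem nakano_inf_eq_one (j : ℕ) (r : ℝ) (hr₀ : 0 < r) (hr₁ : r < 1) :
    (∀ n : ℕ, n ≠ j → 1 ≤ nakanoNorm (eVec j + r • eVec n)) ∧
    (∀ ε : ℝ, 0 < ε → ∃ n : ℕ, n ≠ j ∧ nakanoNorm (eVec j + r • eVec n) < 1 + ε) := by
  constructor
  · intro n hn
    apply le_csInf
    · refine ⟨2, by norm_num, ?_⟩
      rw [nakano_tsum j n hn r 2 hr₀.le]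
      have h1 : (1 / 2 : ℝ) ^ (2 * (j + 1)) ≤ (1/2 : ℝ) ^ 2 :=
        pow_le_pow_of_le_one (by norm_num) (by norm_num) (by omega)
      have h2 : (r / 2 : ℝ) ^ (2 * (n + 1)) ≤ (1/2 : ℝ) ^ (2 * (n + 1)) :=
        pow_le_pow_left₀ (by positivity) (by linarith) _
      have h3 : (1 / 2 : ℝ) ^ (2 * (n + 1)) ≤ (1/2 : ℝ) ^ 2 :=
        pow_le_pow_of_le_one (by norm_num) (by norm_num) (by omega)
      norm_num at h1 h2 h3 ⊢
      linarith
    · rintro l ⟨hl, hsum⟩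
      rw [nakano_tsum j n hn r l hr₀.le] at hsum
      by_contra h
      push_neg at h
      have h1 : 1 < 1 / l := by
        rw [lt_div_iff₀ hl]; linarith
      have h2 : 1 < (1 / l) ^ (2 * (j + 1)) := one_lt_pow₀ h1 (by omega)
      have h3 : 0 ≤ (r / l) ^ (2 * (n + 1)) := by positivity
      linarith
  · intro ε hε
    set l : ℝ := 1 + min ε 1 / 2 with hldef
    have hmin : 0 < min ε 1 := lt_min hε one_pos
    have hl1 : 1 < l := by simp [hldef]; linarith
    have hl0 : 0 < l := by linarith
    have hinv : 1 / l < 1 := by rw [div_lt_one hl0]; linarith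
    have hδ : (1 / l) ^ (2 * (j + 1)) < 1 :=
      pow_lt_one₀ (by positivity) hinv (by omega)
    obtain ⟨N, hN⟩ := exists_pow_lt_of_lt_one (by linarith : (0:ℝ) < 1 - (1/l) ^ (2*(j+1))) hr₁
    refine ⟨N + j + 1, by omega, ?_⟩
    have hmem : l ∈ {l : ℝ | 0 < l ∧
        ∑' k : ℕ, (|(eVec j + r • eVec (N + j + 1)) k| / l) ^ (2 * (k + 1)) ≤ 1} := by
      refine ⟨hl0, ?_⟩
      rw [nakano_tsum j (N + j + 1) (by omega) r l hr₀.le]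
      have h1 : (r / l) ^ (2 * (N + j + 1 + 1)) ≤ r ^ (2 * (N + j + 1 + 1)) := by
        apply pow_le_pow_left₀ (by positivity)
        rw [div_le_iff₀ hl0]; nlinarith
      have h2 : r ^ (2 * (N + j + 1 + 1)) ≤ r ^ N :=
        pow_le_pow_of_le_one hr₀.le hr₁.le (by omega)
      linarith
    have hb : BddBelow {l : ℝ | 0 < l ∧
        ∑' k : ℕ, (|(eVec j + r • eVec (N + j + 1)) k| / l) ^ (2 * (k + 1)) ≤ 1} :=
      ⟨0, fun x hx => hx.1.le⟩
    have := csInf_le hb hmem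
    have hlε : l < 1 + ε := by
      have : min ε 1 ≤ ε := min_le_left _ _
      simp only [hldef]; linarith
    calc nakanoNorm (eVec j + r • eVec (N + j + 1)) ≤ l := this
      _ < 1 + ε := hlε
end

section
/- Let M : [0,∞) → [0,∞) be defined by M(0) = 0, M(t) = (e²/4)·e^{−1/t} for 0 < t < 1/2, and M(t) = t² for t ≥ 1/2. Then for every natural number n ≥ 4, inf{ λ > 0 : n·M(1/λ) ≤ 1 } = 2 − 2·ln 2 + ln n. (This infimum is the Luxemburg norm of the vector Σ_{i=1}^n e_i in the Orlicz sequence space determined by M.) -/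
/-- The Orlicz function `M(0) = 0`, `M(t) = (e²/4)·e^{-1/t}` for `0 < t < 1/2`, and
`M(t) = t²` for `t ≥ 1/2` (extended by `0` to negative arguments). -/
noncomputable def Mfun (t : ℝ) : ℝ :=
  if t ≤ 0 then 0 else if t < 1 / 2 then (Real.exp 2 / 4) * Real.exp (-1 / t) else t ^ 2

/-- For every `n ≥ 4`, the Luxemburg norm of the vector with `n` coordinates equal
to `1` in the Orlicz sequence space determined by `Mfun` equals `2 - 2 ln 2 + ln n`. -/
theorem luxemburg_norm_of_ones (n : ℕ) (hn : 4 ≤ n) :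
    sInf {l : ℝ | 0 < l ∧ (n : ℝ) * Mfun (1 / l) ≤ 1} =
      2 - 2 * Real.log 2 + Real.log n := by
  set L : ℝ := 2 - 2 * Real.log 2 + Real.log n with hL
  have hn4 : (4:ℝ) ≤ (n:ℝ) := by exact_mod_cast hn
  have hnpos : (0:ℝ) < n := by linarith
  have hlog4 : Real.log 4 = 2 * Real.log 2 := by
    rw [show (4:ℝ) = 2^2 by norm_num, Real.log_pow]; push_cast; ring
  have hloglog : Real.log 4 ≤ Real.log n := Real.log_le_log (by norm_num) hn4
  have hL2 : 2 ≤ L := by rw [hL, ← hlog4]; linarith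
  have hexpL : Real.exp L = n * (Real.exp 2 / 4) := by
    rw [hL, ← hlog4, show 2 - Real.log 4 + Real.log n = (2 + Real.log n) - Real.log 4 by ring,
      Real.exp_sub, Real.exp_add, Real.exp_log hnpos, Real.exp_log (by norm_num : (0:ℝ) < 4)]
    ring
  have hMexp : ∀ l : ℝ, 2 < l → Mfun (1 / l) = Real.exp 2 / 4 * Real.exp (-l) := by
    intro l h2
    have hl : (0:ℝ) < l := by linarith
    have hhalf : 1 / l < 1 / 2 := by
      rw [div_lt_div_iff₀ hl (by norm_num)]; linarith
    rw [Mfun, if_neg (not_le.mpr (by positivity)), if_pos hhalf]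
    congr 1
    field_simp
  have hset : {l : ℝ | 0 < l ∧ (n : ℝ) * Mfun (1 / l) ≤ 1} = Set.Ici L := by
    ext l
    simp only [Set.mem_setOf_eq, Set.mem_Ici]
    constructor
    · rintro ⟨hl, hcond⟩
      by_cases h2 : 2 < l
      · rw [hMexp l h2] at hcond
        have hkey : Real.exp (L - l) ≤ 1 := by
          rw [Real.exp_sub, hexpL, div_le_one (Real.exp_pos l)]
          calc (n:ℝ) * (Real.exp 2 / 4)
              = ((n:ℝ) * (Real.exp 2 / 4 * Real.exp (-l))) * Real.exp l := by
                rw [mul_assoc, mul_assoc, ← Real.exp_add]; simp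
            _ ≤ 1 * Real.exp l := by
                exact mul_le_mul_of_nonneg_right hcond (Real.exp_pos l).le
            _ = Real.exp l := by ring
        have := Real.exp_le_one_iff.mp hkey
        linarith
      · -- l ≤ 2, so 1/l ≥ 1/2 and Mfun (1/l) = 1/l²
        push_neg at h2
        have hhalf : ¬ (1 / l < 1 / 2) := by
          push_neg
          rw [div_le_div_iff₀ (by norm_num) hl]; linarith
        have hM : Mfun (1 / l) = (1 / l) ^ 2 := by
          rw [Mfun, if_neg (not_le.mpr (by positivity)), if_neg hhalf]
        rw [hM] at hcond
        have hsq : (n:ℝ) ≤ l ^ 2 := by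
          have hl2 : (0:ℝ) < l ^ 2 := by positivity
          have : (n:ℝ) * (1 / l) ^ 2 = n / l ^ 2 := by field_simp
          rw [this, div_le_one hl2] at hcond
          exact hcond
        have hl2 : 2 ≤ l := by nlinarith
        have hn4' : (n:ℝ) ≤ 4 := by nlinarith
        have : (n:ℝ) = 4 := le_antisymm hn4' hn4
        have hLeq : L = 2 := by
          rw [hL, this, hlog4]; ring
        linarith
    · intro hLl
      have hl : (0:ℝ) < l := by linarith
      refine ⟨hl, ?_⟩
      rcases lt_or_eq_of_le (le_trans hL2 hLl) with h2 | h2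
      · rw [hMexp l h2]
        have : (n:ℝ) * (Real.exp 2 / 4 * Real.exp (-l)) = Real.exp (L - l) := by
          rw [Real.exp_sub, hexpL, Real.exp_neg]; field_simp
        rw [this]
        exact Real.exp_le_one_iff.mpr (by linarith)
      · -- l = 2, so L ≤ 2, hence L = 2 and n = 4
        have hLeq : L = 2 := le_antisymm (h2 ▸ hLl) hL2
        have hlogn : Real.log n ≤ Real.log 4 := by
          rw [hL] at hLeq; rw [hlog4]; linarith
        have hnle : (n:ℝ) ≤ 4 := by
          have := (Real.log_le_log_iff hnpos (by norm_num)).mp hlogn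
          exact this
        have hneq : (n:ℝ) = 4 := le_antisymm hnle hn4
        have hM : Mfun (1 / l) = (1/2:ℝ) ^ 2 := by
          rw [← h2, Mfun]
          norm_num
        rw [hM, hneq]
        norm_num
  rw [hset]
  exact csInf_Ici
end

section
/- Let M : [0,∞) → [0,∞) be defined by M(0) = 0, M(t) = (e²/4)·e^{−1/t} for 0 < t < 1/2, and M(t) = t² for t ≥ 1/2. Then M is strictly convex on [0,∞): for all s, t ≥ 0 with s ≠ t and all θ ∈ (0,1), M(θs + (1−θ)t) < θ·M(s) + (1−θ)·M(t). In particular, M is convex, continuous, non-decreasing, M(0) = 0, and M(t) → ∞ as t → ∞. -/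
open Real Set Filter Topology

lemma Mfun_of_le_half {t : ℝ} (h0 : 0 < t) (h : t ≤ 1 / 2) : Mfun t = exp (2 - t⁻¹) / 4 := by
  rcases h.lt_or_eq with h | rfl
  · rw [Mfun, if_neg h0.not_ge, if_pos h, sub_eq_add_neg, exp_add, neg_div, one_div]
    ring
  · norm_num [Mfun]

lemma Mfun_of_half_le {t : ℝ} (h : 1 / 2 ≤ t) : Mfun t = t ^ 2 := by
  rw [Mfun, if_neg (by linarith), if_neg h.not_gt]

noncomputable def MfunDeriv (t : ℝ) : ℝ :=
  if t < 1 / 2 then exp (2 - t⁻¹) / (2 * t) ^ 2 else 2 * t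

lemma MfunDeriv_of_le_half {t : ℝ} (h : t ≤ 1 / 2) :
    MfunDeriv t = exp (2 - t⁻¹) / (2 * t) ^ 2 := by
  rcases h.lt_or_eq with h | rfl
  · rw [MfunDeriv, if_pos h]
  · norm_num [MfunDeriv]

lemma MfunDeriv_of_half_le {t : ℝ} (h : 1 / 2 ≤ t) : MfunDeriv t = 2 * t := by
  rw [MfunDeriv, if_neg h.not_gt]

lemma hasDerivAt_exp_two_sub_inv_div_four {t : ℝ} (ht : t ≠ 0) :
    HasDerivAt (fun x ↦ exp (2 - x⁻¹) / 4) (exp (2 - t⁻¹) / (2 * t) ^ 2) t := by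
  refine (((hasDerivAt_inv ht).const_sub 2).exp.div_const 4).congr_deriv ?_
  field_simp
  ring

lemma hasDerivAt_Mfun {t : ℝ} (ht : 0 < t) : HasDerivAt Mfun (MfunDeriv t) t := by
  rcases lt_trichotomy t (1 / 2) with h | rfl | h
  · rw [MfunDeriv_of_le_half h.le]
    refine (hasDerivAt_exp_two_sub_inv_div_four ht.ne').congr_of_eventuallyEq ?_
    filter_upwards [Ioo_mem_nhds ht h] with x hx using Mfun_of_le_half hx.1 hx.2.le
  · have hleft : HasDerivWithinAt Mfun (MfunDeriv (1 / 2)) (Iic (1 / 2)) (1 / 2) := by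
      rw [MfunDeriv_of_le_half le_rfl]
      refine (hasDerivAt_exp_two_sub_inv_div_four (by norm_num)).hasDerivWithinAt
        |>.congr_of_eventuallyEq ?_ (Mfun_of_le_half (by norm_num) le_rfl)
      filter_upwards [Ioc_mem_nhdsLE (by norm_num : (0 : ℝ) < 1 / 2)] with x hx
        using Mfun_of_le_half hx.1 hx.2
    have hright : HasDerivWithinAt Mfun (MfunDeriv (1 / 2)) (Ici (1 / 2)) (1 / 2) := by
      rw [MfunDeriv_of_half_le le_rfl]
      simpa using ((hasDerivAt_pow 2 (1 / 2 : ℝ)).hasDerivWithinAt (s := Ici (1 / 2))).congr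
        (fun x hx ↦ Mfun_of_half_le hx) (Mfun_of_half_le le_rfl)
    simpa using hleft.union hright
  · rw [MfunDeriv_of_half_le h.le]
    refine ((hasDerivAt_pow 2 t).congr_of_eventuallyEq ?_).congr_deriv (by ring)
    filter_upwards [Ioi_mem_nhds h] with x hx using Mfun_of_half_le hx.le

lemma MfunDeriv_pos {t : ℝ} (ht : 0 < t) : 0 < MfunDeriv t := by
  rcases le_total t (1 / 2) with h | h
  · rw [MfunDeriv_of_le_half h]; positivity
  · rw [MfunDeriv_of_half_le h]; positivity

lemma strictAntiOn_mul_exp_neg : StrictAntiOn (fun v : ℝ ↦ v * exp (-v)) (Ici 1) := by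
  intro v (hv : 1 ≤ v) w _ hvw
  have hw : w < v * exp (w - v) := calc
    w ≤ v * (w - v + 1) := by nlinarith
    _ < v * exp (w - v) := by gcongr; exact add_one_lt_exp (sub_ne_zero.2 hvw.ne')
  calc w * exp (-w) < v * exp (w - v) * exp (-w) := by gcongr
    _ = v * exp (-v) := by rw [mul_assoc, ← exp_add]; ring_nf

lemma MfunDeriv_eq_sq_mul_exp_neg {t : ℝ} (h : t ≤ 1 / 2) :
    MfunDeriv t = exp 2 * ((2 * t)⁻¹ * exp (-(2 * t)⁻¹)) ^ 2 := by
  have hexp : exp (2 - t⁻¹) = exp 2 * exp (-(2 * t)⁻¹) ^ 2 := by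
    rw [sq, ← exp_add, ← exp_add]
    ring_nf
  rw [MfunDeriv_of_le_half h, hexp]
  ring

lemma strictMonoOn_MfunDeriv : StrictMonoOn MfunDeriv (Ioi 0) := by
  have hsmall : StrictMonoOn MfunDeriv (Ioc 0 (1 / 2)) := by
    intro a ⟨ha0, ha⟩ b ⟨hb0, hb⟩ hab
    have hv : (2 * b)⁻¹ < (2 * a)⁻¹ := by gcongr
    have hb1 : (1 : ℝ) ≤ (2 * b)⁻¹ := by rw [one_le_inv₀ (by positivity)]; linarith
    rw [MfunDeriv_eq_sq_mul_exp_neg ha, MfunDeriv_eq_sq_mul_exp_neg hb]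
    have hanti := strictAntiOn_mul_exp_neg hb1 (hb1.trans hv.le) hv
    gcongr exp 2 * ?_ ^ 2
  have hlarge : StrictMonoOn MfunDeriv (Ici (1 / 2)) := fun a ha b hb hab ↦ by
    rw [MfunDeriv_of_half_le ha, MfunDeriv_of_half_le hb]; linarith
  simpa using hsmall.union hlarge (isGreatest_Ioc (by norm_num)) isLeast_Ici

lemma continuousOn_Mfun : ContinuousOn Mfun (Ici 0) := by
  intro t (ht : 0 ≤ t)
  rcases ht.lt_or_eq with ht | rfl
  · exact (hasDerivAt_Mfun ht).continuousAt.continuousWithinAt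
  rw [← continuousWithinAt_Ioi_iff_Ici, ContinuousWithinAt, show Mfun 0 = 0 by simp [Mfun]]
  have hlim : Tendsto (fun x : ℝ ↦ exp (2 - x⁻¹) / 4) (𝓝[>] 0) (𝓝 0) := by
    have h := tendsto_atBot_add_const_left _ (2 : ℝ)
      (tendsto_neg_atTop_atBot.comp tendsto_inv_nhdsGT_zero)
    simpa [← sub_eq_add_neg] using (tendsto_exp_atBot.comp h).div_const 4
  refine hlim.congr' ?_
  filter_upwards [Ioc_mem_nhdsGT (by norm_num : (0 : ℝ) < 1 / 2)] with x hx
    using (Mfun_of_le_half hx.1 hx.2).symm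

lemma strictConvexOn_Mfun : StrictConvexOn ℝ (Ici 0) Mfun := by
  refine StrictMonoOn.strictConvexOn_of_deriv (convex_Ici 0) continuousOn_Mfun ?_
  rw [interior_Ici]
  exact strictMonoOn_MfunDeriv.congr fun t ht ↦ (hasDerivAt_Mfun ht).deriv.symm

lemma strictMonoOn_Mfun : StrictMonoOn Mfun (Ici 0) := by
  refine strictMonoOn_of_deriv_pos (convex_Ici 0) continuousOn_Mfun fun t ht ↦ ?_
  rw [interior_Ici] at ht
  rw [(hasDerivAt_Mfun ht).deriv]
  exact MfunDeriv_pos ht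

lemma tendsto_Mfun_atTop : Tendsto Mfun atTop atTop := by
  refine (tendsto_pow_atTop two_ne_zero).congr' ?_
  filter_upwards [eventually_ge_atTop (1 / 2)] with t ht using (Mfun_of_half_le ht).symm

/-- `Mfun` is strictly convex on `[0, ∞)`; moreover it is convex, continuous,
non-decreasing on `[0, ∞)`, vanishes at `0`, and tends to `∞` at `∞`. -/
theorem Mfun_strictly_convex :
    (∀ s t : ℝ, 0 ≤ s → 0 ≤ t → s ≠ t → ∀ θ : ℝ, 0 < θ → θ < 1 →
      Mfun (θ * s + (1 - θ) * t) < θ * Mfun s + (1 - θ) * Mfun t) ∧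
    ConvexOn ℝ (Set.Ici 0) Mfun ∧
    ContinuousOn Mfun (Set.Ici 0) ∧
    MonotoneOn Mfun (Set.Ici 0) ∧
    Mfun 0 = 0 ∧
    Filter.Tendsto Mfun Filter.atTop Filter.atTop := by
  refine ⟨fun s t hs ht hst θ hθ hθ1 ↦ ?_, strictConvexOn_Mfun.convexOn, continuousOn_Mfun,
    strictMonoOn_Mfun.monotoneOn, by simp [Mfun], tendsto_Mfun_atTop⟩
  simpa using strictConvexOn_Mfun.2 hs ht hst hθ (sub_pos.2 hθ1) (by ring)
end

section
/- Let X be a real Banach space and let Z := X × c₀(ℕ) with norm ‖(x, y)‖∞ = max(‖x‖, ‖y‖∞). Define Φ(x, y) = ‖x‖ + Σ_{n=1}^∞ (y_n)^{2n} (a finite, convergent sum for y ∈ c₀(ℕ)), and |||z||| := inf{ λ > 0 : Φ(z/λ) ≤ 1 }. Then for every z ∈ Z with |||z||| = 1, one has Φ(z) = 1. -/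
/-!
The map `t ↦ Φ(t • z)` is continuous on `ℝ`: the norm part clearly is, and on each ball
`|t| < R` the series part is dominated by the summable series `∑ (R |y_n|)^{2(n+1)}`, since
`R |y_n| → 0`. So `l ↦ Φ(l⁻¹ • z)` is continuous at `1`. The infimum `1` of its sublevel set
`{l > 0 : Φ(l⁻¹ • z) ≤ 1}` lies in the closure of that set, which gives `Φ(z) ≤ 1`; and if
`Φ(z) < 1`, some `l < 1` would still lie in the sublevel set.
-/

open Filter Topology

/-- Membership in `c₀(ℕ)`: sequences converging to `0`. -/
def IsC0Seq (y : ℕ → ℝ) : Prop := Filter.Tendsto y Filter.atTop (nhds 0)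

/-- The function `Φ(x, y) = ‖x‖ + Σ_{n=1}^∞ y_n^{2n}` on `Z = X × c₀(ℕ)`, where the
Lean coordinate `n : ℕ` plays the role of the paper's coordinate `n + 1`. -/
noncomputable def PhiZ {X : Type*} [NormedAddCommGroup X] (z : X × (ℕ → ℝ)) : ℝ :=
  ‖z.1‖ + ∑' n : ℕ, (z.2 n) ^ (2 * (n + 1))

/-- The Minkowski functional `|||z||| = inf { λ > 0 : Φ(z/λ) ≤ 1 }` of `{Φ ≤ 1}`. -/
noncomputable def tnormZ {X : Type*} [NormedAddCommGroup X] [NormedSpace ℝ X]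
    (z : X × (ℕ → ℝ)) : ℝ :=
  sInf {l : ℝ | 0 < l ∧ PhiZ (l⁻¹ • z) ≤ 1}

lemma summable_pow_of_tendsto_zero {y : ℕ → ℝ} (hy : Tendsto y atTop (𝓝 0)) {e : ℕ → ℕ}
    (he : ∀ n, n ≤ e n) : Summable fun n => y n ^ e n := by
  refine Summable.of_norm_bounded_eventually_nat
    (summable_geometric_of_lt_one (by norm_num : (0 : ℝ) ≤ 1 / 2) (by norm_num)) ?_
  have hsmall : ∀ᶠ n in atTop, ‖y n‖ ≤ 1 / 2 := by
    simpa only [dist_zero_right] using hy.eventually (Metric.closedBall_mem_nhds 0 one_half_pos)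
  filter_upwards [hsmall] with n hn
  calc ‖y n ^ e n‖ = ‖y n‖ ^ e n := norm_pow _ _
    _ ≤ (1 / 2) ^ e n := pow_le_pow_left₀ (norm_nonneg _) hn _
    _ ≤ (1 / 2) ^ n := pow_le_pow_of_le_one (by norm_num) (by norm_num) (he n)

lemma continuous_tsum_mul_pow_of_tendsto_zero {y : ℕ → ℝ} (hy : Tendsto y atTop (𝓝 0))
    {e : ℕ → ℕ} (he : ∀ n, n ≤ e n) : Continuous fun t : ℝ => ∑' n, (t * y n) ^ e n := by
  refine continuous_iff_continuousAt.2 fun t₀ => ?_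
  set R := |t₀| + 1
  have hdom : Summable fun n => (R * |y n|) ^ e n := by
    refine summable_pow_of_tendsto_zero ?_ he
    simpa using hy.abs.const_mul R
  have hball : ContinuousOn (fun t : ℝ => ∑' n, (t * y n) ^ e n) (Metric.ball 0 R) := by
    refine continuousOn_tsum (fun n => by fun_prop) hdom fun n t ht => ?_
    rw [mem_ball_zero_iff, Real.norm_eq_abs] at ht
    rw [Real.norm_eq_abs, abs_pow, abs_mul]
    gcongr
  refine hball.continuousAt (Metric.isOpen_ball.mem_nhds ?_)
  rw [mem_ball_zero_iff, Real.norm_eq_abs]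
  exact lt_add_one _

lemma continuous_phiZ_smul {X : Type*} [NormedAddCommGroup X] [NormedSpace ℝ X]
    {z : X × (ℕ → ℝ)} (hz : IsC0Seq z.2) : Continuous fun t : ℝ => PhiZ (t • z) := by
  have hseries := continuous_tsum_mul_pow_of_tendsto_zero hz (e := fun n => 2 * (n + 1))
    (fun n => by omega)
  simp only [PhiZ, Prod.smul_fst, Prod.smul_snd, Pi.smul_apply, smul_eq_mul]
  exact (by fun_prop : Continuous fun t : ℝ => ‖t • z.1‖).add hseries

lemma eq_of_continuousAt_of_sInf_sublevel_eq {g : ℝ → ℝ} {a c : ℝ} (hg : ContinuousAt g a)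
    (ha : 0 < a) (hinf : sInf {l | 0 < l ∧ g l ≤ c} = a) : g a = c := by
  set S := {l | 0 < l ∧ g l ≤ c}
  have hne : S.Nonempty := by
    by_contra hempty
    rw [Set.not_nonempty_iff_eq_empty.1 hempty, Real.sInf_empty] at hinf
    exact ha.ne hinf
  have hbdd : BddBelow S := ⟨0, fun l hl => hl.1.le⟩
  refine le_antisymm ?_ (not_lt.1 fun hlt => ?_)
  · have hcl : a ∈ closure S := hinf ▸ csInf_mem_closure hne hbdd
    exact closure_minimal (Set.image_subset_iff.2 fun l hl => hl.2) isClosed_Iic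
      (hg.continuousWithinAt.mem_closure_image hcl)
  · obtain ⟨b, hba, hb⟩ :=
      ((hg.eventually (gt_mem_nhds hlt)).and (lt_mem_nhds ha)).exists_lt
    exact hba.not_ge (hinf ▸ csInf_le hbdd ⟨hb.2, hb.1.le⟩)

theorem PhiZ_eq_one_on_unit_sphere_general
    {X : Type*} [NormedAddCommGroup X] [NormedSpace ℝ X]
    (z : X × (ℕ → ℝ)) (hz : IsC0Seq z.2) (h1 : tnormZ z = 1) :
    PhiZ z = 1 := by
  have hcont : ContinuousAt (fun l : ℝ => PhiZ (l⁻¹ • z)) 1 :=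
    (continuous_phiZ_smul hz).continuousAt.comp (continuousAt_inv₀ one_ne_zero)
  simpa using eq_of_continuousAt_of_sInf_sublevel_eq hcont one_pos h1

/-- On `Z = X × c₀(ℕ)`, every element of the `|||·|||`-unit sphere satisfies
`Φ(z) = 1`. -/
theorem PhiZ_eq_one_on_unit_sphere
    {X : Type*} [NormedAddCommGroup X] [NormedSpace ℝ X] [CompleteSpace X]
    (z : X × (ℕ → ℝ)) (hz : IsC0Seq z.2) (h1 : tnormZ z = 1) :
    PhiZ z = 1 :=
  PhiZ_eq_one_on_unit_sphere_general z hz h1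
end

section
/- Let X be a strictly convex real Banach space. Let Z := X × c₀(ℕ), define Φ(x, y) = ‖x‖ + Σ_{n=1}^∞ (y_n)^{2n} for (x, y) ∈ Z, and let |||z||| := inf{ λ > 0 : Φ(z/λ) ≤ 1 }. Then (Z, |||·|||) is almost square: for every finite list z₁, …, z_k ∈ Z with |||z_i||| = 1 for all i and every ε > 0, there exists h ∈ Z with |||h||| = 1 and |||z_i + h||| ≤ 1 + ε for all i = 1, …, k. -/
/-!
Take `h = (0, e_N)` for a large `N`; clearly `|||h||| = 1`. If `|||z||| = 1`, then
`Φ(z / l) ≤ 1` for some `l ≤ 1 + ε/2`. Off the `N`-th coordinate, `Φ((z + h)/(1 + ε))` is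
`Φ(t · z/l)` with `t = l/(1 + ε) ≤ 1`, and `Φ(t w) ≤ t Φ(w)` because every exponent is at
least `1`; so this part is at most `(1 + ε/2)/(1 + ε)`. The `N`-th coordinate contributes
`((z_N + 1)/(1 + ε))^(2(N+1))`, which is at most `ε/2/(1 + ε)` once `|z_N| ≤ ε/2` for all
the given `z` and `N` is large.
-/

open Filter

lemma IsC0Seq.summable_pow_two_mul_succ {y : ℕ → ℝ} (hy : IsC0Seq y) :
    Summable fun n => y n ^ (2 * (n + 1)) := by
  refine Summable.of_norm_bounded_eventually_nat
    (summable_geometric_of_lt_one (by norm_num : (0 : ℝ) ≤ 1 / 2) (by norm_num)) ?_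
  filter_upwards [hy.abs.eventually_le_const (by norm_num : |(0 : ℝ)| < 1 / 2)] with n hn
  rw [Real.norm_eq_abs, abs_pow]
  calc |y n| ^ (2 * (n + 1)) ≤ (1 / 2 : ℝ) ^ (2 * (n + 1)) :=
        pow_le_pow_left₀ (abs_nonneg _) hn _
    _ ≤ (1 / 2 : ℝ) ^ n := pow_le_pow_of_le_one (by norm_num) (by norm_num) (by omega)

lemma isC0Seq_single (N : ℕ) (a : ℝ) : IsC0Seq (Pi.single N a) :=
  tendsto_const_nhds.congr' <| by
    filter_upwards [eventually_gt_atTop N] with n hn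
    simp [hn.ne']

lemma IsC0Seq.const_smul {y : ℕ → ℝ} (hy : IsC0Seq y) (c : ℝ) : IsC0Seq (c • y) := by
  have h := Filter.Tendsto.const_smul hy c
  rw [smul_zero] at h
  exact h

section Norm

variable {X : Type*} [NormedAddCommGroup X]

lemma phiZ_add_single_le (x : X) {y : ℕ → ℝ} (hy : Summable fun n => y n ^ (2 * (n + 1)))
    (N : ℕ) (a : ℝ) :
    PhiZ (x, y + Pi.single N a) ≤ PhiZ (x, y) + (y N + a) ^ (2 * (N + 1)) := by
  set b := (y N + a) ^ (2 * (N + 1))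
  have hterm : ∀ n, (y + Pi.single N a : ℕ → ℝ) n ^ (2 * (n + 1))
      ≤ y n ^ (2 * (n + 1)) + (Pi.single N b : ℕ → ℝ) n := by
    intro n
    rcases eq_or_ne n N with rfl | hn
    · simpa [b] using (even_two_mul _).pow_nonneg _
    · simp [hn]
  have hs : Summable fun n => y n ^ (2 * (n + 1)) + (Pi.single N b : ℕ → ℝ) n :=
    hy.add (hasSum_pi_single N b).summable
  have hle := Summable.tsum_le_tsum hterm
    (hs.of_nonneg_of_le (fun n => (even_two_mul _).pow_nonneg _) hterm) hs
  rw [hy.tsum_add (hasSum_pi_single N b).summable, tsum_pi_single] at hle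
  simp only [PhiZ]
  linarith

lemma phiZ_zero_single (N : ℕ) (a : ℝ) : PhiZ ((0 : X), Pi.single N a) = a ^ (2 * (N + 1)) := by
  have hterm : ∀ n, (Pi.single N a : ℕ → ℝ) n ^ (2 * (n + 1))
      = (Pi.single N (a ^ (2 * (N + 1))) : ℕ → ℝ) n := by
    intro n
    rcases eq_or_ne n N with rfl | hn
    · simp
    · simp [hn]
  simp only [PhiZ, norm_zero, zero_add, hterm, tsum_pi_single]

variable [NormedSpace ℝ X]

lemma phiZ_smul_le {z : X × (ℕ → ℝ)} (hz : Summable fun n => z.2 n ^ (2 * (n + 1)))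
    {t : ℝ} (ht₀ : 0 ≤ t) (ht₁ : t ≤ 1) : PhiZ (t • z) ≤ t * PhiZ z := by
  have hterm : ∀ n, (t * z.2 n) ^ (2 * (n + 1)) ≤ t * z.2 n ^ (2 * (n + 1)) := fun n => by
    rw [mul_pow]
    exact mul_le_mul_of_nonneg_right (pow_le_of_le_one ht₀ ht₁ (by omega))
      ((even_two_mul _).pow_nonneg _)
  have hsum : ∑' n, (t * z.2 n) ^ (2 * (n + 1)) ≤ t * ∑' n, z.2 n ^ (2 * (n + 1)) := by
    rw [← tsum_mul_left]
    exact Summable.tsum_le_tsum hterm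
      ((hz.mul_left t).of_nonneg_of_le (fun n => (even_two_mul _).pow_nonneg _) hterm)
      (hz.mul_left t)
  simp only [PhiZ, Prod.smul_fst, Prod.smul_snd, Pi.smul_apply, smul_eq_mul, norm_smul,
    Real.norm_of_nonneg ht₀]
  linarith

lemma tnormZ_le_of_phiZ_le {z : X × (ℕ → ℝ)} {l : ℝ} (hl : 0 < l) (h : PhiZ (l⁻¹ • z) ≤ 1) :
    tnormZ z ≤ l :=
  csInf_le ⟨0, fun _ hm => hm.1.le⟩ ⟨hl, h⟩

lemma exists_phiZ_le_of_tnormZ_lt {z : X × (ℕ → ℝ)} {r : ℝ} (h₀ : 0 < tnormZ z)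
    (hr : tnormZ z < r) : ∃ l, 0 < l ∧ l < r ∧ PhiZ (l⁻¹ • z) ≤ 1 := by
  have hne : {l : ℝ | 0 < l ∧ PhiZ (l⁻¹ • z) ≤ 1}.Nonempty := by
    by_contra hempty
    rw [Set.not_nonempty_iff_eq_empty] at hempty
    simp [tnormZ, hempty] at h₀
  obtain ⟨l, ⟨hl, hΦ⟩, hlr⟩ := exists_lt_of_csInf_lt hne hr
  exact ⟨l, hl, hlr, hΦ⟩

lemma tnormZ_zero_single (N : ℕ) (a : ℝ) : tnormZ ((0 : X), Pi.single N a) = |a| := by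
  have hset : {l : ℝ | 0 < l ∧ PhiZ (l⁻¹ • ((0 : X), Pi.single N a)) ≤ 1}
      = Set.Ioi 0 ∩ Set.Ici |a| := by
    ext l
    simp only [Set.mem_ofPred_eq, Set.mem_inter_iff, Set.mem_Ioi, Set.mem_Ici, Prod.smul_mk,
      smul_zero, ← Pi.single_smul, phiZ_zero_single]
    refine and_congr_right fun hl => ?_
    rw [← (even_two_mul _).pow_abs, pow_le_one_iff_of_nonneg (abs_nonneg _) (by omega),
      smul_eq_mul, abs_mul, abs_inv, abs_of_pos hl, inv_mul_le_one₀ hl]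
  rw [tnormZ, hset]
  rcases eq_or_ne a 0 with rfl | ha
  · rw [abs_zero, Set.inter_eq_left.2 Set.Ioi_subset_Ici_self, csInf_Ioi]
  · rw [Set.inter_eq_right.2 (Set.Ici_subset_Ioi.2 (abs_pos.2 ha)), csInf_Ici]

lemma tnormZ_add_single_le {z : X × (ℕ → ℝ)} (hz : IsC0Seq z.2) (hz₁ : tnormZ z = 1)
    {ε : ℝ} (hε : 0 < ε) {N : ℕ} (hzN : |z.2 N| ≤ ε / 2)
    (hN : ((1 + ε / 2) / (1 + ε)) ^ (2 * (N + 1)) ≤ ε / 2 / (1 + ε)) :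
    tnormZ (z + ((0 : X), Pi.single N 1)) ≤ 1 + ε := by
  obtain ⟨l, hl₀, hl, hΦ⟩ := exists_phiZ_le_of_tnormZ_lt (r := 1 + ε / 2)
    (hz₁ ▸ one_pos) (by linarith)
  have hε₁ : 0 < 1 + ε := by linarith
  refine tnormZ_le_of_phiZ_le hε₁ ?_
  set c := (1 + ε)⁻¹ with hc
  have hsplit :
      c • (z + ((0 : X), Pi.single N 1)) = ((c • z).1, (c • z).2 + Pi.single N c) := by
    ext n <;> simp [← Pi.single_smul]
  have hscale : c • z = (l / (1 + ε)) • (l⁻¹ • z) := by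
    rw [smul_smul, hc]
    congr 1
    field_simp
  have hcoord : ((c • z).2 N + c) ^ (2 * (N + 1)) ≤ ε / 2 / (1 + ε) := by
    refine le_trans ?_ hN
    rw [← (even_two_mul _).pow_abs]
    refine pow_le_pow_left₀ (abs_nonneg _) ?_ _
    calc |(c • z).2 N + c| = c * |z.2 N + 1| := by
          simp [hc, ← mul_add_one, abs_mul, abs_of_pos hε₁]
      _ ≤ c * (1 + ε / 2) := by
          gcongr
          linarith [abs_add_le (z.2 N) 1, abs_one (α := ℝ)]
      _ = (1 + ε / 2) / (1 + ε) := by rw [hc, inv_mul_eq_div]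
  have hsum : Summable fun n => (l⁻¹ • z).2 n ^ (2 * (n + 1)) :=
    (hz.const_smul l⁻¹).summable_pow_two_mul_succ
  calc PhiZ (c • (z + ((0 : X), Pi.single N 1)))
      ≤ PhiZ (c • z) + ((c • z).2 N + c) ^ (2 * (N + 1)) := by
        rw [hsplit]
        exact phiZ_add_single_le _ (hz.const_smul c).summable_pow_two_mul_succ N c
    _ ≤ l / (1 + ε) * PhiZ (l⁻¹ • z) + ε / 2 / (1 + ε) := by
        gcongr ?_ + ?_
        · rw [hscale]
          exact phiZ_smul_le hsum (by positivity) ((div_le_one hε₁).2 (by linarith))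
    _ ≤ (1 + ε / 2) / (1 + ε) + ε / 2 / (1 + ε) := by
        gcongr
        exact (mul_le_of_le_one_right (by positivity) hΦ).trans (by gcongr)
    _ = 1 := by field_simp; ring

end Norm

theorem tnormZ_almost_square_general
    {X : Type*} [NormedAddCommGroup X] [NormedSpace ℝ X] :
    ∀ (k : ℕ) (z : Fin k → X × (ℕ → ℝ)), (∀ i, IsC0Seq (z i).2) →
      (∀ i, tnormZ (z i) = 1) → ∀ ε : ℝ, 0 < ε →
        ∃ h : X × (ℕ → ℝ), IsC0Seq h.2 ∧ tnormZ h = 1 ∧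
          ∀ i, tnormZ (z i + h) ≤ 1 + ε := by
  intro k z hz hz₁ ε hε
  have hsmall : ∀ᶠ n in atTop, ∀ i, |(z i).2 n| ≤ ε / 2 :=
    eventually_all.2 fun i => (hz i).abs.eventually_le_const (by simpa using half_pos hε)
  have hq : (1 + ε / 2) / (1 + ε) < 1 := (div_lt_one (by linarith)).2 (by linarith)
  have hpow : ∀ᶠ n : ℕ in atTop, ((1 + ε / 2) / (1 + ε)) ^ (2 * (n + 1)) ≤ ε / 2 / (1 + ε) :=
    ((tendsto_pow_atTop_nhds_zero_of_lt_one (by positivity) hq).comp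
      (tendsto_atTop_mono (g := fun n => 2 * (n + 1)) (fun n => by dsimp; omega)
        tendsto_id)).eventually_le_const (by positivity)
  obtain ⟨N, hN₁, hN₂⟩ := (hsmall.and hpow).exists
  refine ⟨((0 : X), Pi.single N 1), isC0Seq_single N 1, ?_,
    fun i => tnormZ_add_single_le (hz i) (hz₁ i) hε (hN₁ i) hN₂⟩
  rw [tnormZ_zero_single, abs_one]

/-- If `X` is strictly convex, then `(Z, |||·|||)` with `Z = X × c₀(ℕ)` is almost
square. -/
theorem tnormZ_almost_square
    {X : Type*} [NormedAddCommGroup X] [NormedSpace ℝ X] [CompleteSpace X]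
    (hX : ∀ x y : X, ‖x‖ = 1 → ‖y‖ = 1 → ‖x + y‖ = 2 → x = y) :
    ∀ (k : ℕ) (z : Fin k → X × (ℕ → ℝ)), (∀ i, IsC0Seq (z i).2) →
      (∀ i, tnormZ (z i) = 1) → ∀ ε : ℝ, 0 < ε →
        ∃ h : X × (ℕ → ℝ), IsC0Seq h.2 ∧ tnormZ h = 1 ∧
          ∀ i, tnormZ (z i + h) ≤ 1 + ε :=
  tnormZ_almost_square_general
end
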